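/- Every vector of the form h_{kl} + Σ_{i=1}^d c_i a_{ii} with c_i ∈ ℤ_{≥0} is a hole of the CDEM semigroup: it lies in Q_sat but is not a nonnegative integer combination of the columns a_{ij}. -/

import Mathlib

open Finset

/-- The column `a_{ij}` of the CDEM matrix: 1 in coordinate `j`, 1 in coordinate
`d + i`, 1 in coordinate `2d` (the last one) iff `i = j`, and 0 elsewhere
(coordinates are 0-based). -/
def acol (d : ℕ) (i j : Fin d) : Fin (2 * d + 1) → ℤ := fun t =>
  (if (t : ℕ) = (j : ℕ) then 1 else 0) +
  (if (t : ℕ) = d + (i : ℕ) then 1 else 0) +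
  (if (t : ℕ) = 2 * d ∧ i = j then 1 else 0)

/-- The vector `h_{kl} = (a_{ll} + a_{lk} + a_{kl} + a_{kk}) / 2`. -/
def hvec (d : ℕ) (k l : Fin d) : Fin (2 * d + 1) → ℤ := fun t =>
  (acol d l l t + acol d l k t + acol d k l t + acol d k k t) / 2

/-- The CDEM semigroup: nonnegative integer combinations of the columns. -/
def cdemQ (d : ℕ) : Set (Fin (2 * d + 1) → ℤ) :=
  {b | ∃ x : Fin d → Fin d → ℕ, b = fun t => ∑ i, ∑ j, (x i j : ℤ) * acol d i j t}

/-- The real cone `K(A)` generated by the CDEM columns. -/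
def cdemCone (d : ℕ) (v : Fin (2 * d + 1) → ℝ) : Prop :=
  ∃ x : Fin d → Fin d → ℝ, (∀ i j, 0 ≤ x i j) ∧
    v = fun t => ∑ i, ∑ j, x i j * (acol d i j t : ℝ)

/-- The saturation `Q_sat = K(A) ∩ ℤ^{2d+1}` of the CDEM semigroup. -/
def cdemQsat (d : ℕ) : Set (Fin (2 * d + 1) → ℤ) :=
  {b | cdemCone d fun t => (b t : ℝ)}

/-- The `i`-th coordinate (0-based, `i < d`) as an index into `Fin (2d+1)`. -/
def idx1 (d : ℕ) (i : Fin d) : Fin (2 * d + 1) := ⟨(i : ℕ), by have := i.isLt; omega⟩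

/-- The `(d+i)`-th coordinate as an index into `Fin (2d+1)`. -/
def idx2 (d : ℕ) (i : Fin d) : Fin (2 * d + 1) := ⟨d + (i : ℕ), by have := i.isLt; omega⟩


/-!
Twice the vector `v = h_{kl} + ∑ c_i a_{ii}` is the nonnegative integer combination
`a_{kk} + a_{kl} + a_{lk} + a_{ll} + ∑ 2 c_i a_{ii}`, so `v` lies in the cone. Conversely the
coordinates of `∑ x_{ij} a_{ij}` are the column sums, the row sums and the trace of `x`. If
`v = ∑ x_{ij} a_{ij}` with `x` natural, comparing with the combination for `2 v` shows that `x`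
has equal row and column sums and that its off-diagonal entries add up to `1`, which is
impossible.
-/

/-- Read `x` as a multidigraph with `x i j` edges from `i` to `j`. If every vertex has equal in-
and out-degree, there is not exactly one non-loop edge: its tail would have more outgoing than
incoming non-loop edges. -/
lemma sum_sum_ne_sum_diag_add_one {ι : Type*} [Fintype ι] [DecidableEq ι] (x : ι → ι → ℕ)
    (hx : ∀ i, ∑ j, x i j = ∑ j, x j i) :
    ∑ i, ∑ j, x i j ≠ ∑ i, x i i + 1 := by
  intro htot
  set out : ι → ℕ := fun i => ∑ j ∈ univ.erase i, x i j
  have hout : ∀ i, out i + x i i = ∑ j, x i j := fun i => sum_erase_add _ _ (mem_univ i)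
  have hin : ∀ i, ∑ j ∈ univ.erase i, x j i + x i i = ∑ j, x j i := fun i =>
    sum_erase_add _ _ (mem_univ i)
  have hbal : ∀ i, out i = ∑ j ∈ univ.erase i, x j i := fun i => by
    have := hout i; have := hin i; have := hx i; omega
  have hsum : ∑ i, out i = 1 := by
    have := sum_congr rfl fun i (_ : i ∈ univ) => hout i
    rw [sum_add_distrib, htot] at this
    omega
  obtain ⟨p, -, hp⟩ := exists_ne_zero_of_sum_ne_zero (hsum ▸ one_ne_zero)
  obtain ⟨q, hq, hqp⟩ := exists_ne_zero_of_sum_ne_zero (hbal p ▸ hp)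
  have hq_ne : p ≠ q := (ne_of_mem_erase hq).symm
  have hout_q : x q p ≤ out q :=
    single_le_sum (fun _ _ => Nat.zero_le _) (mem_erase.mpr ⟨hq_ne, mem_univ p⟩)
  have hpair : out p + out q ≤ ∑ i, out i := by
    rw [← sum_pair hq_ne]
    exact sum_le_sum_of_subset (subset_univ _)
  omega

section

variable {d : ℕ}

lemma two_dvd_acol_add (k l : Fin d) (t : Fin (2 * d + 1)) :
    2 ∣ acol d l l t + acol d l k t + acol d k l t + acol d k k t := by
  simp only [acol, Fin.ext_iff]
  split_ifs <;> omega

lemma two_mul_hvec (k l : Fin d) (t : Fin (2 * d + 1)) :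
    2 * hvec d k l t = acol d l l t + acol d l k t + acol d k l t + acol d k k t :=
  Int.mul_ediv_cancel' (two_dvd_acol_add k l t)

lemma acol_idx1 (i j j' : Fin d) :
    acol d i j (idx1 d j') = if j' = j then 1 else 0 := by
  simp only [acol, idx1, Fin.ext_iff]
  split_ifs <;> omega

lemma acol_idx2 (i j i' : Fin d) :
    acol d i j (idx2 d i') = if i' = i then 1 else 0 := by
  simp only [acol, idx2, Fin.ext_iff]
  split_ifs <;> omega

lemma acol_last (i j : Fin d) :
    acol d i j (Fin.last (2 * d)) = if i = j then 1 else 0 := by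
  have := i.isLt
  simp only [acol, Fin.val_last, Fin.ext_iff, true_and]
  split_ifs <;> omega

lemma sum_mul_acol_idx1 (x : Fin d → Fin d → ℕ) (j : Fin d) :
    ∑ i, ∑ j', (x i j' : ℤ) * acol d i j' (idx1 d j) = ((∑ i, x i j : ℕ) : ℤ) := by
  simp [acol_idx1]

lemma sum_mul_acol_idx2 (x : Fin d → Fin d → ℕ) (i : Fin d) :
    ∑ i', ∑ j, (x i' j : ℤ) * acol d i' j (idx2 d i) = ((∑ j, x i j : ℕ) : ℤ) := by
  simp [acol_idx2]

lemma sum_mul_acol_last (x : Fin d → Fin d → ℕ) :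
    ∑ i, ∑ j, (x i j : ℤ) * acol d i j (Fin.last (2 * d)) = ((∑ i, x i i : ℕ) : ℤ) := by
  simp [acol_last]

def twiceHoleCoeff (k l : Fin d) (c : Fin d → ℕ) (i j : Fin d) : ℕ :=
  (if i ∈ ({k, l} : Finset (Fin d)) ∧ j ∈ ({k, l} : Finset (Fin d)) then 1 else 0) +
    if i = j then 2 * c i else 0

lemma twiceHoleCoeff_comm (k l : Fin d) (c : Fin d → ℕ) (i j : Fin d) :
    twiceHoleCoeff k l c i j = twiceHoleCoeff k l c j i := by
  unfold twiceHoleCoeff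
  by_cases h : i = j
  · subst h; rfl
  · simp [h, Ne.symm h, and_comm]

lemma sum_twiceHoleCoeff {k l : Fin d} (hkl : k ≠ l) (c : Fin d → ℕ) :
    ∑ i, ∑ j, twiceHoleCoeff k l c i j = ∑ i, twiceHoleCoeff k l c i i + 2 := by
  simp only [twiceHoleCoeff, sum_add_distrib, ite_and, sum_ite_irrel, sum_const_zero,
    sum_ite_mem, univ_inter, sum_ite_eq, mem_univ, if_true, inter_self, sum_const, card_pair hkl,
    smul_eq_mul, mul_one]
  ring

lemma sum_mul_acol_twiceHoleCoeff {k l : Fin d} (hkl : k ≠ l) (c : Fin d → ℕ)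
    (t : Fin (2 * d + 1)) :
    ∑ i, ∑ j, (twiceHoleCoeff k l c i j : ℤ) * acol d i j t =
      2 * (hvec d k l t + ∑ i, (c i : ℤ) * acol d i i t) := by
  simp only [twiceHoleCoeff, Nat.cast_add, Nat.cast_ite, Nat.cast_zero, Nat.cast_one, add_mul,
    ite_mul, one_mul, zero_mul, sum_add_distrib, ite_and, sum_ite_irrel, sum_const_zero,
    sum_ite_mem, univ_inter, sum_ite_eq, mem_univ, if_true]
  rw [sum_pair hkl, sum_pair hkl, sum_pair hkl, mul_add, two_mul_hvec, mul_sum]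
  push_cast
  simp only [mul_assoc]
  ring

lemma hole_mem_cdemQsat {k l : Fin d} (hkl : k ≠ l) (c : Fin d → ℕ) :
    (fun t => hvec d k l t + ∑ i, (c i : ℤ) * acol d i i t) ∈ cdemQsat d := by
  refine ⟨fun i j => (twiceHoleCoeff k l c i j : ℝ) / 2, fun i j => by positivity, ?_⟩
  funext t
  have h := congrArg (Int.cast : ℤ → ℝ) (sum_mul_acol_twiceHoleCoeff hkl c t)
  push_cast at h ⊢
  simp only [div_mul_eq_mul_div, ← sum_div, h]
  ring

lemma hole_not_mem_cdemQ {k l : Fin d} (hkl : k ≠ l) (c : Fin d → ℕ) :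
    (fun t => hvec d k l t + ∑ i, (c i : ℤ) * acol d i i t) ∉ cdemQ d := by
  rintro ⟨x, hx⟩
  set y := twiceHoleCoeff k l c
  have hxy : ∀ t, ∑ i, ∑ j, ((2 * x i j : ℕ) : ℤ) * acol d i j t =
      ∑ i, ∑ j, (y i j : ℤ) * acol d i j t := fun t => by
    rw [sum_mul_acol_twiceHoleCoeff hkl c t, congrFun hx t, mul_sum]
    push_cast
    simp only [mul_sum, mul_assoc]
  have hcol : ∀ j, ∑ i, 2 * x i j = ∑ i, y i j := fun j => by
    exact_mod_cast (sum_mul_acol_idx1 _ j).symm.trans ((hxy _).trans (sum_mul_acol_idx1 y j))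
  have hrow : ∀ i, ∑ j, 2 * x i j = ∑ j, y i j := fun i => by
    exact_mod_cast (sum_mul_acol_idx2 _ i).symm.trans ((hxy _).trans (sum_mul_acol_idx2 y i))
  have hdiag : ∑ i, 2 * x i i = ∑ i, y i i := by
    exact_mod_cast (sum_mul_acol_last _).symm.trans ((hxy _).trans (sum_mul_acol_last y))
  refine sum_sum_ne_sum_diag_add_one x (fun i => ?_) ?_
  · have hbal := hrow i
    rw [← mul_sum, sum_congr rfl fun j _ => twiceHoleCoeff_comm k l c i j, ← hcol i,
      ← mul_sum] at hbal
    omega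
  · have htot : ∑ i, ∑ j, y i j = ∑ i, y i i + 2 := sum_twiceHoleCoeff hkl c
    simp only [← hrow, ← hdiag, ← mul_sum] at htot
    omega

end

theorem hvec_monoid_two_holes_general (d : ℕ) (k l : Fin d) (hkl : k < l)
    (c : Fin d → ℕ) :
    (fun t => hvec d k l t + ∑ i, (c i : ℤ) * acol d i i t) ∈ cdemQsat d ∧
    (fun t => hvec d k l t + ∑ i, (c i : ℤ) * acol d i i t) ∉ cdemQ d :=
  ⟨hole_mem_cdemQsat hkl.ne c, hole_not_mem_cdemQ hkl.ne c⟩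

/-- Every vector of the form `h_{kl} + Σ_{i=1}^d c_i a_{ii}` with nonnegative integer
`c_i` is a hole of the CDEM semigroup: it lies in `Q_sat` but is not a nonnegative
integer combination of the columns `a_{ij}`. -/
theorem hvec_monoid_two_holes (d : ℕ) (hd : 2 ≤ d) (k l : Fin d) (hkl : k < l)
    (c : Fin d → ℕ) :
    (fun t => hvec d k l t + ∑ i, (c i : ℤ) * acol d i i t) ∈ cdemQsat d ∧
    (fun t => hvec d k l t + ∑ i, (c i : ℤ) * acol d i i t) ∉ cdemQ d :=
  hvec_monoid_two_holes_general d k l hkl c
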